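/- For any x = (x_{k,j}) in ℓ¹(ℓ²_k) (i.e. Σ_{k=1}^∞ (Σ_{j=0}^{k−1} |x_{k,j}|²)^{1/2} < ∞), the series Σ_{k,j} x_{k,j} K̂_{λ_{k,j}} converges in H²(𝔻), where λ_{k,j} = (1 − 1/k)exp(2πij/k) and K̂_λ = (1 − |λ|²)^{1/2}(1 − λ̄z)^{−1}; moreover ‖Σ x_{k,j} K̂_{λ_{k,j}}‖_{H²} ≤ C Σ_k (Σ_j |x_{k,j}|²)^{1/2} for a constant C independent of x. -/

import Mathlib

open Complex

/-- The Szegő kernel `K_λ(z) = (1 - λ̄z)⁻¹` regarded as the element of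
`H² ≅ ℓ²` with Taylor coefficients `λ̄ⁿ` (and `0` if `‖λ‖ ≥ 1`). -/
noncomputable def szegoKernel (l : ℂ) : lp (fun _ : ℕ => ℂ) 2 :=
  if h : ‖l‖ < 1 then
    ⟨fun n => (starRingEnd ℂ l) ^ n, by
      apply memℓp_gen
      have h2 : ‖l‖ ^ 2 < 1 := by
        have := pow_lt_one₀ (norm_nonneg l) h (two_ne_zero)
        simpa using this
      have : Summable fun n : ℕ => (‖l‖ ^ 2) ^ n :=
        summable_geometric_of_lt_one (by positivity) h2
      refine this.congr fun n => ?_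
      simp [ENNReal.toReal_ofNat, norm_pow, ← pow_mul, mul_comm 2 n]⟩
  else 0

/-- The normalized Szegő kernel `K̂_λ = (1 - |λ|²)^{1/2} K_λ`. -/
noncomputable def szegoKernelHat (l : ℂ) : lp (fun _ : ℕ => ℂ) 2 :=
  ((Real.sqrt (1 - ‖l‖ ^ 2) : ℝ) : ℂ) • szegoKernel l

/-- The point `λ_{k,j} = (1 - 1/(k+1)) exp(2πij/(k+1))`. -/
noncomputable def lamPoint (p : Σ k : ℕ, Fin (k + 1)) : ℂ :=
  ((1 - 1 / ((p.1 : ℝ) + 1)) : ℂ) *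
    Complex.exp (2 * (Real.pi : ℂ) * Complex.I * ((p.2 : ℕ) : ℂ) / (((p.1 : ℕ) : ℂ) + 1))

/-! ### Auxiliary material -/

/-- The root of unity `exp(-2πij/(k+1))`. -/
noncomputable def wRoot (k j : ℕ) : ℂ :=
  Complex.exp (-(2 * (Real.pi : ℂ) * Complex.I * (j : ℂ)) / ((k : ℂ) + 1))

lemma base_eq (k : ℕ) : ((1:ℂ) - 1 / (((k:ℝ) : ℂ) + 1)) = ((1 - 1 / ((k : ℝ) + 1) : ℝ) : ℂ) := by
  push_cast; ring

lemma norm_lamPoint (k : ℕ) (j : Fin (k + 1)) :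
    ‖lamPoint ⟨k, j⟩‖ = 1 - 1 / ((k : ℝ) + 1) := by
  have h1 : (0:ℝ) < (k:ℝ) + 1 := by positivity
  have h2 : 1 / ((k : ℝ) + 1) ≤ 1 := by
    rw [div_le_one h1]; linarith [Nat.cast_nonneg (α := ℝ) k]
  have harg : 2 * (Real.pi : ℂ) * Complex.I * ((j : ℕ) : ℂ) / (((k : ℕ) : ℂ) + 1)
      = ((2 * Real.pi * (j : ℕ) / ((k:ℝ) + 1) : ℝ) : ℂ) * Complex.I := by
    push_cast
    field_simp
  show ‖((1:ℂ) - 1 / (((k:ℝ) : ℂ) + 1)) * _‖ = _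
  rw [norm_mul, harg, base_eq]
  rw [Complex.norm_exp_ofReal_mul_I]
  rw [Complex.norm_real, Real.norm_eq_abs, _root_.abs_of_nonneg (by linarith), mul_one]

lemma conj_lamPoint (k : ℕ) (j : Fin (k + 1)) :
    (starRingEnd ℂ) (lamPoint ⟨k, j⟩) = ((1 - 1 / ((k : ℝ) + 1) : ℝ) : ℂ) * wRoot k j := by
  show (starRingEnd ℂ) (((1:ℂ) - 1 / (((k:ℝ) : ℂ) + 1)) * _) = _
  rw [base_eq, map_mul, Complex.conj_ofReal, wRoot, ← Complex.exp_conj]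
  congr 2
  simp [map_div₀, Complex.conj_I, map_ofNat]

lemma conj_wRoot (k j : ℕ) :
    (starRingEnd ℂ) (wRoot k j)
      = Complex.exp (2 * (Real.pi : ℂ) * Complex.I * (j : ℂ) / ((k : ℂ) + 1)) := by
  rw [wRoot, ← Complex.exp_conj]
  congr 1
  simp [map_div₀, Complex.conj_I, map_ofNat]

lemma conj_wRoot_mul (k : ℕ) (j j' : Fin (k+1)) :
    (starRingEnd ℂ) (wRoot k j') * wRoot k j
      = Complex.exp (2 * (Real.pi : ℂ) * Complex.I * ((j' : ℂ) - (j : ℂ)) / ((k : ℂ) + 1)) := by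
  rw [conj_wRoot, wRoot, ← Complex.exp_add]
  congr 1
  have hk : ((k : ℂ) + 1) ≠ 0 := by
    have := Nat.cast_add_one_ne_zero (R := ℂ) k
    simpa using this
  field_simp
  ring

lemma wRoot_pow (k j : ℕ) : wRoot k j ^ (k + 1) = 1 := by
  rw [wRoot, ← Complex.exp_nat_mul]
  have hk : ((k : ℂ) + 1) ≠ 0 := by
    have := Nat.cast_add_one_ne_zero (R := ℂ) k
    simpa using this
  have harg : (((k:ℕ) + 1 : ℕ) : ℂ) * (-(2 * (Real.pi : ℂ) * Complex.I * (j : ℂ)) / ((k : ℂ) + 1))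
      = ((-(j:ℤ) : ℤ) : ℂ) * (2 * (Real.pi : ℂ) * Complex.I) := by
    push_cast
    field_simp
  rw [harg]
  exact Complex.exp_int_mul_two_pi_mul_I _

lemma sum_pow_unit (k : ℕ) (j j' : Fin (k+1)) :
    ∑ s ∈ Finset.range (k+1), ((starRingEnd ℂ) (wRoot k j') * wRoot k j) ^ s
      = if j = j' then ((k : ℂ) + 1) else 0 := by
  have hk : ((k : ℂ) + 1) ≠ 0 := by
    have := Nat.cast_add_one_ne_zero (R := ℂ) k
    simpa using this
  rw [conj_wRoot_mul]
  by_cases h : j = j'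
  · subst h
    simp
  · set u : ℂ := Complex.exp (2 * (Real.pi : ℂ) * Complex.I * ((j' : ℂ) - (j : ℂ)) / ((k : ℂ) + 1)) with hu
    have hupow : u ^ (k + 1) = 1 := by
      rw [hu, ← Complex.exp_nat_mul]
      have : ((k:ℂ) + 1) * (2 * (Real.pi : ℂ) * Complex.I * ((j' : ℂ) - (j : ℂ)) / ((k : ℂ) + 1))
          = (((j' : ℤ) - (j : ℤ) : ℤ) : ℂ) * (2 * (Real.pi : ℂ) * Complex.I) := by
        field_simp
        push_cast
        ring
      push_cast
      rw [this]
      exact Complex.exp_int_mul_two_pi_mul_I _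
    have hu1 : u ≠ 1 := by
      intro h1
      rw [hu, Complex.exp_eq_one_iff] at h1
      obtain ⟨m, hm⟩ := h1
      have h2 : ((j' : ℂ) - (j : ℂ)) = (m : ℂ) * ((k : ℂ) + 1) := by
        have hpi : (2 * (Real.pi : ℂ) * Complex.I) ≠ 0 := by
          simp [Real.pi_ne_zero, Complex.I_ne_zero]
        field_simp at hm
        have := hm
        apply mul_left_cancel₀ hpi
        ring_nf
        ring_nf at this
        linear_combination (2 * (Real.pi : ℂ) * Complex.I) * this
      have h3 : ((j' : ℤ) - (j : ℤ)) = m * ((k : ℤ) + 1) := by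
        exact_mod_cast h2
      have hj : (j : ℤ) < (k:ℤ) + 1 := by exact_mod_cast j.isLt
      have hj' : (j' : ℤ) < (k:ℤ) + 1 := by exact_mod_cast j'.isLt
      have hj0 : (0:ℤ) ≤ (j : ℤ) := by positivity
      have hj0' : (0:ℤ) ≤ (j' : ℤ) := by positivity
      have hne : (j' : ℤ) ≠ (j : ℤ) := by
        intro hh
        apply h
        have : (j : ℕ) = (j' : ℕ) := by exact_mod_cast hh.symm
        exact Fin.ext this
      rcases lt_trichotomy m 0 with hm0 | hm0 | hm0
      · nlinarith
      · subst hm0; simp at h3; omega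
      · nlinarith
    rw [if_neg h, geom_sum_eq hu1, hupow]
    simp

lemma szegoKernelHat_apply {l : ℂ} (hl : ‖l‖ < 1) (n : ℕ) :
    (szegoKernelHat l : ℕ → ℂ) n
      = ((Real.sqrt (1 - ‖l‖ ^ 2) : ℝ) : ℂ) * ((starRingEnd ℂ) l) ^ n := by
  rw [szegoKernelHat, lp.coeFn_smul, Pi.smul_apply, smul_eq_mul]
  congr 1
  rw [szegoKernel, dif_pos hl]

/-- Parseval for the finite "DFT". -/
lemma parseval (k : ℕ) (y : Fin (k+1) → ℂ) :
    ∑ s ∈ Finset.range (k+1), ‖∑ j, y j * (wRoot k j) ^ s‖ ^ 2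
      = ((k : ℝ) + 1) * ∑ j, ‖y j‖ ^ 2 := by
  have hw := sum_pow_unit k
  have key : ∀ z : ℂ, ‖z‖ ^ 2 = (z * (starRingEnd ℂ) z).re := by
    intro z
    rw [Complex.mul_conj]
    simp [Complex.sq_norm]
  have lhs_eq : ∑ s ∈ Finset.range (k+1), ‖∑ j, y j * (wRoot k j) ^ s‖ ^ 2
      = (∑ s ∈ Finset.range (k+1),
          ((∑ j, y j * (wRoot k j) ^ s) * (starRingEnd ℂ) (∑ j, y j * (wRoot k j) ^ s))).re := by
    rw [Complex.re_sum]
    exact Finset.sum_congr rfl fun s _ => key _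
  rw [lhs_eq]
  have expand : ∀ s : ℕ,
      (∑ j, y j * (wRoot k j) ^ s) * (starRingEnd ℂ) (∑ j, y j * (wRoot k j) ^ s)
      = ∑ j, ∑ j', (y j * (starRingEnd ℂ) (y j')) *
          ((starRingEnd ℂ) (wRoot k j') * wRoot k j) ^ s := by
    intro s
    rw [map_sum, Finset.sum_mul_sum]
    refine Finset.sum_congr rfl fun j _ => Finset.sum_congr rfl fun j' _ => ?_
    rw [map_mul, map_pow, mul_pow]
    ring
  have swap : ∑ s ∈ Finset.range (k+1),
        ((∑ j, y j * (wRoot k j) ^ s) * (starRingEnd ℂ) (∑ j, y j * (wRoot k j) ^ s))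
      = ∑ j, ∑ j', (y j * (starRingEnd ℂ) (y j')) *
          (∑ s ∈ Finset.range (k+1), ((starRingEnd ℂ) (wRoot k j') * wRoot k j) ^ s) := by
    simp_rw [expand, Finset.mul_sum]
    rw [Finset.sum_comm]
    exact Finset.sum_congr rfl fun j _ => Finset.sum_comm
  rw [swap]
  have diag : ∑ j, ∑ j', (y j * (starRingEnd ℂ) (y j')) *
      (∑ s ∈ Finset.range (k+1), ((starRingEnd ℂ) (wRoot k j') * wRoot k j) ^ s)
      = ((k:ℂ) + 1) * ∑ j, y j * (starRingEnd ℂ) (y j) := by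
    rw [Finset.mul_sum]
    refine Finset.sum_congr rfl fun j _ => ?_
    rw [Finset.sum_congr rfl fun j' _ => by rw [hw j j']]
    simp [Finset.sum_ite_eq]
    ring
  rw [diag]
  have hyy : ∀ j, (y j * (starRingEnd ℂ) (y j)) = ((‖y j‖ ^ 2 : ℝ) : ℂ) := by
    intro j
    rw [Complex.mul_conj]
    simp [← Complex.sq_norm]
  simp_rw [hyy]
  rw [← Complex.ofReal_sum]
  rw [show ((k:ℂ)+1) = (((k:ℝ)+1 : ℝ) : ℂ) by push_cast; ring, ← Complex.ofReal_mul,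
    Complex.ofReal_re]

set_option maxHeartbeats 1000000 in
/-- The key block bound: uniform Bessel bound on each circle. -/
lemma block_bound (k : ℕ) (y : Fin (k + 1) → ℂ) :
    ‖∑ j : Fin (k + 1), y j • szegoKernelHat (lamPoint ⟨k, j⟩)‖
      ≤ 2 * Real.sqrt (∑ j : Fin (k + 1), ‖y j‖ ^ 2) := by
  classical
  set r : ℝ := 1 - 1 / ((k : ℝ) + 1) with hr
  have hKpos : (0:ℝ) < (k:ℝ) + 1 := by positivity
  have hinv_pos : 0 < 1 / ((k:ℝ) + 1) := by positivity
  have hinv_le : 1 / ((k : ℝ) + 1) ≤ 1 := by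
    rw [div_le_one hKpos]; linarith [Nat.cast_nonneg (α := ℝ) k]
  have hr0 : 0 ≤ r := by rw [hr]; linarith
  have hr1 : r < 1 := by rw [hr]; linarith
  have hr2 : r ^ 2 ≤ 1 := by nlinarith
  have h1r2 : 0 ≤ 1 - r ^ 2 := by linarith
  set X : ℝ := ∑ j : Fin (k+1), ‖y j‖ ^ 2 with hX
  have hX0 : 0 ≤ X := Finset.sum_nonneg fun j _ => by positivity
  set v : lp (fun _ : ℕ => ℂ) 2 := ∑ j : Fin (k + 1), y j • szegoKernelHat (lamPoint ⟨k, j⟩)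
    with hv
  set F : ℕ → ℂ := fun n => ∑ j : Fin (k+1), y j * wRoot k j ^ n with hF
  -- coefficients of v
  have hnormlam : ∀ j : Fin (k+1), ‖lamPoint ⟨k, j⟩‖ = r := fun j => norm_lamPoint k j
  have hlamlt : ∀ j : Fin (k+1), ‖lamPoint ⟨k, j⟩‖ < 1 := fun j => by rw [hnormlam]; exact hr1
  have hcoeff : ∀ n : ℕ, (v : ℕ → ℂ) n
      = ((Real.sqrt (1 - r ^ 2) : ℝ) : ℂ) * ((r : ℂ)) ^ n * F n := by
    intro n
    rw [hv, lp.coeFn_sum, Finset.sum_apply]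
    simp only [lp.coeFn_smul, Pi.smul_apply, smul_eq_mul]
    have hterm : ∀ j : Fin (k+1),
        y j * (szegoKernelHat (lamPoint ⟨k, j⟩) : ℕ → ℂ) n
          = ((Real.sqrt (1 - r ^ 2) : ℝ) : ℂ) * ((r : ℂ)) ^ n * (y j * wRoot k j ^ n) := by
      intro j
      rw [szegoKernelHat_apply (hlamlt j), hnormlam j, conj_lamPoint, mul_pow]
      ring
    rw [Finset.sum_congr rfl fun j _ => hterm j, ← Finset.mul_sum]
  have hnormsq : ∀ n : ℕ, ‖(v : ℕ → ℂ) n‖ ^ 2 = (1 - r ^ 2) * (r ^ 2) ^ n * ‖F n‖ ^ 2 := by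
    intro n
    rw [hcoeff n, norm_mul, norm_mul, norm_pow]
    rw [Complex.norm_real, Real.norm_eq_abs, _root_.abs_of_nonneg (Real.sqrt_nonneg _)]
    rw [Complex.norm_real, Real.norm_eq_abs, _root_.abs_of_nonneg hr0]
    rw [mul_pow, mul_pow, Real.sq_sqrt h1r2, ← pow_mul, mul_comm n 2, pow_mul]
  -- periodicity of F
  have hFper : ∀ t s : ℕ, F (t * (k+1) + s) = F s := by
    intro t s
    induction t with
    | zero => simp
    | succ t ih =>
      have h1 : (t + 1) * (k+1) + s = (t * (k+1) + s) + (k+1) := by ring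
      rw [h1]
      have h2 : ∀ j : Fin (k+1), y j * wRoot k j ^ (t * (k+1) + s + (k+1))
          = y j * wRoot k j ^ (t * (k+1) + s) := by
        intro j
        rw [pow_add, wRoot_pow k j, mul_one]
      calc F (t * (k+1) + s + (k+1)) = F (t * (k+1) + s) := by
            simp only [hF]
            exact Finset.sum_congr rfl fun j _ => h2 j
        _ = F s := ih
  set q : ℝ := (r ^ 2) ^ (k+1) with hq
  have hq0 : 0 ≤ q := by positivity
  -- q ≤ 1/2 via Bernoulli
  have hqle : q ≤ 1 / 2 := by
    set u : ℝ := 1 / ((k:ℝ) + 1) with hu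
    have h1 := one_add_mul_le_pow (a := u) (by linarith : (-2:ℝ) ≤ u) (2 * (k + 1))
    have hcast : ((2 * (k + 1) : ℕ) : ℝ) * u = 2 := by
      rw [hu]
      push_cast
      field_simp
    have hB : (3:ℝ) ≤ (1 + u) ^ (2 * (k + 1)) := by
      rw [hcast] at h1
      linarith
    have hrb : r * (1 + u) ≤ 1 := by
      rw [hr]
      nlinarith [sq_nonneg u]
    have hq_pow : q = r ^ (2 * (k + 1)) := by
      rw [hq, pow_mul]
    have hprod : q * (1 + u) ^ (2 * (k + 1)) ≤ 1 := by
      rw [hq_pow, ← mul_pow]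
      calc (r * (1 + u)) ^ (2 * (k + 1)) ≤ 1 ^ (2 * (k + 1)) :=
            pow_le_pow_left₀ (by positivity) hrb _
        _ = 1 := one_pow _
    nlinarith [hq0, hB, hprod]
  -- the coefficient norms, grouped
  set A : ℕ → ℝ := fun n => (1 - r ^ 2) * (r ^ 2) ^ n * ‖F n‖ ^ 2 with hA
  have hA0 : ∀ n, 0 ≤ A n := by
    intro n
    simp only [hA]
    have h3 : (0:ℝ) ≤ (r ^ 2) ^ n := by positivity
    positivity
  have hAper : ∀ t s : ℕ, A (t * (k + 1) + s) = q ^ t * A s := by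
    intro t s
    simp only [hA]
    rw [hFper t s, pow_add, mul_comm t (k + 1), pow_mul, ← hq]
    ring
  have hBle : ∑ s ∈ Finset.range (k + 1), A s ≤ 2 * X := by
    have h1 : ∀ s : ℕ, A s ≤ (1 - r ^ 2) * ‖F s‖ ^ 2 := by
      intro s
      simp only [hA]
      have h2 : (r ^ 2) ^ s ≤ 1 := pow_le_one₀ (by positivity) hr2
      have h4 := mul_le_mul_of_nonneg_right
        (mul_le_mul_of_nonneg_left h2 h1r2) (sq_nonneg ‖F s‖)
      simpa using h4
    have hpar : ∑ s ∈ Finset.range (k+1), ‖F s‖ ^ 2 = ((k : ℝ) + 1) * X := by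
      simp only [hF]
      rw [hX]
      exact parseval k y
    calc ∑ s ∈ Finset.range (k + 1), A s
        ≤ ∑ s ∈ Finset.range (k + 1), (1 - r ^ 2) * ‖F s‖ ^ 2 :=
          Finset.sum_le_sum fun s _ => h1 s
      _ = (1 - r ^ 2) * ∑ s ∈ Finset.range (k + 1), ‖F s‖ ^ 2 := by
          rw [Finset.mul_sum]
      _ = (1 - r ^ 2) * (((k : ℝ) + 1) * X) := by rw [hpar]
      _ ≤ 2 * X := by
          have hfac : (1 - r ^ 2) * ((k:ℝ) + 1) ≤ 2 := by
            have hu1 : (1 / ((k:ℝ) + 1)) * ((k:ℝ) + 1) = 1 := by field_simp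
            rw [hr]
            nlinarith [hu1, mul_nonneg (mul_nonneg hinv_pos.le hinv_pos.le) hKpos.le]
          have h5 := mul_le_mul_of_nonneg_right hfac hX0
          nlinarith [h5]
  have hB0 : 0 ≤ ∑ s ∈ Finset.range (k + 1), A s :=
    Finset.sum_nonneg fun s _ => hA0 s
  have hblock : ∀ T : ℕ, ∑ n ∈ Finset.range (T * (k + 1)), A n
      = (∑ t ∈ Finset.range T, q ^ t) * (∑ s ∈ Finset.range (k + 1), A s) := by
    intro T
    induction T with
    | zero => simp
    | succ T ih =>
      have hsplit : ∑ n ∈ Finset.range ((T + 1) * (k + 1)), A n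
          = ∑ n ∈ Finset.range (T * (k + 1)), A n
            + ∑ x ∈ Finset.range (k + 1), A (T * (k + 1) + x) := by
        rw [Nat.succ_mul]
        exact Finset.sum_range_add _ _ _
      rw [hsplit, ih, Finset.sum_congr rfl fun x _ => hAper T x, ← Finset.mul_sum]
      conv_rhs => rw [Finset.sum_range_succ, add_mul]
  have hgeom : ∀ T : ℕ, ∑ t ∈ Finset.range T, q ^ t ≤ 2 := by
    intro T
    have hq1 : q < 1 := lt_of_le_of_lt hqle (by norm_num)
    rw [geom_sum_eq (ne_of_lt hq1) T]
    have hd : q - 1 < 0 := by linarith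
    rw [div_le_iff_of_neg hd]
    have hT : (0:ℝ) ≤ q ^ T := pow_nonneg hq0 T
    nlinarith
  have hPS : ∀ N : ℕ, ∑ n ∈ Finset.range N, A n ≤ 4 * X := by
    intro N
    have hsub : Finset.range N ⊆ Finset.range (N * (k + 1)) :=
      Finset.range_subset_range.2 (Nat.le_mul_of_pos_right N (Nat.succ_pos k))
    calc ∑ n ∈ Finset.range N, A n
        ≤ ∑ n ∈ Finset.range (N * (k + 1)), A n :=
          Finset.sum_le_sum_of_subset_of_nonneg hsub fun i _ _ => hA0 i
      _ = (∑ t ∈ Finset.range N, q ^ t) * (∑ s ∈ Finset.range (k + 1), A s) := hblock N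
      _ ≤ 2 * (2 * X) := mul_le_mul (hgeom N) hBle hB0 (by norm_num)
      _ = 4 * X := by ring
  -- assemble the norm bound
  have hnorm2 : ‖v‖ ^ 2 ≤ 4 * X := by
    have h2 := lp.norm_rpow_eq_tsum (p := 2) (by norm_num) v
    have htoReal : ((2 : ENNReal)).toReal = (2:ℝ) := by simp
    rw [htoReal] at h2
    have hpow : ‖v‖ ^ (2:ℝ) = ‖v‖ ^ (2:ℕ) := by
      rw [show ((2:ℝ)) = ((2:ℕ):ℝ) by norm_num, Real.rpow_natCast]
    have hpow' : ∀ n : ℕ, ‖(v : ℕ → ℂ) n‖ ^ (2:ℝ) = ‖(v : ℕ → ℂ) n‖ ^ (2:ℕ) := by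
      intro n
      rw [show ((2:ℝ)) = ((2:ℕ):ℝ) by norm_num, Real.rpow_natCast]
    rw [hpow] at h2
    rw [tsum_congr hpow'] at h2
    rw [show ‖v‖ ^ 2 = ‖v‖ ^ (2:ℕ) from rfl, h2]
    have hAn : ∀ n : ℕ, ‖(v : ℕ → ℂ) n‖ ^ (2:ℕ) = A n := fun n => hnormsq n
    rw [tsum_congr hAn]
    exact Real.tsum_le_of_sum_range_le hA0 hPS
  have hfinal : ‖v‖ ≤ 2 * Real.sqrt X := by
    have hs := Real.sqrt_le_sqrt hnorm2
    rw [Real.sqrt_sq (norm_nonneg v)] at hs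
    have h4 : Real.sqrt (4 * X) = 2 * Real.sqrt X := by
      rw [Real.sqrt_mul (by norm_num : (0:ℝ) ≤ 4)]
      congr 1
      rw [show (4:ℝ) = 2 ^ 2 by norm_num, Real.sqrt_sq (by norm_num : (0:ℝ) ≤ 2)]
    rw [h4] at hs
    exact hs
  exact hfinal

lemma filter_block_bound (x : (Σ k : ℕ, Fin (k + 1)) → ℂ)
    (t : Finset (Σ k : ℕ, Fin (k + 1))) (k : ℕ) :
    ‖∑ p ∈ t.filter (fun p => p.1 = k), x p • szegoKernelHat (lamPoint p)‖
      ≤ 2 * Real.sqrt (∑ j : Fin (k + 1), ‖x ⟨k, j⟩‖ ^ 2) := by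
  classical
  set y : Fin (k+1) → ℂ :=
    fun j => if (⟨k, j⟩ : Σ k, Fin (k+1)) ∈ t then x ⟨k, j⟩ else 0 with hy
  have himg : t.filter (fun p => p.1 = k)
      = Finset.image (fun j : Fin (k+1) => (⟨k, j⟩ : Σ k, Fin (k+1)))
          ((Finset.univ : Finset (Fin (k+1))).filter
            (fun j => (⟨k, j⟩ : Σ k, Fin (k+1)) ∈ t)) := by
    ext p
    obtain ⟨k', j'⟩ := p
    simp only [Finset.mem_filter, Finset.mem_image, Finset.mem_univ, true_and]
    constructor
    · rintro ⟨hp, rfl⟩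
      exact ⟨j', hp, rfl⟩
    · rintro ⟨j, hj, hjeq⟩
      cases hjeq
      exact ⟨hj, rfl⟩
  have hsum : ∑ p ∈ t.filter (fun p => p.1 = k), x p • szegoKernelHat (lamPoint p)
      = ∑ j : Fin (k+1), y j • szegoKernelHat (lamPoint ⟨k, j⟩) := by
    rw [himg, Finset.sum_image (fun a _ b _ h => sigma_mk_injective h)]
    rw [Finset.sum_filter]
    refine Finset.sum_congr rfl fun j _ => ?_
    rw [hy]
    by_cases hjt : (⟨k, j⟩ : Σ k, Fin (k+1)) ∈ t <;> simp [hjt]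
  rw [hsum]
  refine le_trans (block_bound k y) ?_
  have hyx : ∑ j : Fin (k+1), ‖y j‖ ^ 2 ≤ ∑ j : Fin (k+1), ‖x ⟨k, j⟩‖ ^ 2 := by
    refine Finset.sum_le_sum fun j _ => ?_
    rw [hy]
    by_cases hjt : (⟨k, j⟩ : Σ k, Fin (k+1)) ∈ t <;> simp [hjt] <;> positivity
  have := Real.sqrt_le_sqrt hyx
  linarith

/-- For coefficients `x ∈ ℓ¹(ℓ²_k)`, the series `Σ x_{k,j} K̂_{λ_{k,j}}`
converges in `H²(𝔻)` with norm bounded by `C·‖x‖_{ℓ¹(ℓ²)}` for a constant `C`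
independent of `x`. -/
theorem synthesis_bounded_on_l1l2 :
    ∃ C : ℝ, 0 < C ∧
      ∀ x : (Σ k : ℕ, Fin (k + 1)) → ℂ,
        Summable (fun k : ℕ => Real.sqrt (∑ j : Fin (k + 1), ‖x ⟨k, j⟩‖ ^ 2)) →
        Summable (fun p : Σ k : ℕ, Fin (k + 1) => x p • szegoKernelHat (lamPoint p)) ∧
        ‖∑' p : Σ k : ℕ, Fin (k + 1), x p • szegoKernelHat (lamPoint p)‖
          ≤ C * ∑' k : ℕ, Real.sqrt (∑ j : Fin (k + 1), ‖x ⟨k, j⟩‖ ^ 2) := by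
  classical
  refine ⟨2, by norm_num, fun x hx => ?_⟩
  set S : ℕ → ℝ := fun k => Real.sqrt (∑ j : Fin (k + 1), ‖x ⟨k, j⟩‖ ^ 2) with hS
  have hS0 : ∀ k, 0 ≤ S k := fun k => Real.sqrt_nonneg _
  set f : (Σ k : ℕ, Fin (k + 1)) → lp (fun _ : ℕ => ℂ) 2 :=
    fun p => x p • szegoKernelHat (lamPoint p) with hf
  have hsummable : Summable f := by
    rw [summable_iff_vanishing_norm]
    intro ε hε
    obtain ⟨s₀, hs₀⟩ := summable_iff_vanishing_norm.1 hx (ε/3) (by linarith)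
    refine ⟨s₀.sigma (fun k => Finset.univ), fun t ht => ?_⟩
    have hgroup : ∑ p ∈ t, f p
        = ∑ k ∈ t.image Sigma.fst, ∑ p ∈ t.filter (fun p => p.1 = k), f p :=
      (Finset.sum_fiberwise_of_maps_to (fun p hp => Finset.mem_image_of_mem _ hp) f).symm
    have hdisj : Disjoint (t.image Sigma.fst) s₀ := by
      rw [Finset.disjoint_left]
      intro k hk hk0
      obtain ⟨p, hp, rfl⟩ := Finset.mem_image.1 hk
      have : p ∈ s₀.sigma (fun k => Finset.univ) :=
        Finset.mem_sigma.2 ⟨hk0, Finset.mem_univ _⟩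
      exact (Finset.disjoint_left.1 ht hp) this
    have hsmall : ∑ k ∈ t.image Sigma.fst, S k < ε / 3 := by
      have := hs₀ _ hdisj
      have habs : ‖∑ k ∈ t.image Sigma.fst, S k‖
          = ∑ k ∈ t.image Sigma.fst, S k := by
        rw [Real.norm_eq_abs, _root_.abs_of_nonneg (Finset.sum_nonneg fun k _ => hS0 k)]
      rw [habs] at this
      exact this
    calc ‖∑ p ∈ t, f p‖
        = ‖∑ k ∈ t.image Sigma.fst, ∑ p ∈ t.filter (fun p => p.1 = k), f p‖ := by
          rw [hgroup]
      _ ≤ ∑ k ∈ t.image Sigma.fst, ‖∑ p ∈ t.filter (fun p => p.1 = k), f p‖ :=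
          norm_sum_le _ _
      _ ≤ ∑ k ∈ t.image Sigma.fst, 2 * S k :=
          Finset.sum_le_sum fun k _ => filter_block_bound x t k
      _ = 2 * ∑ k ∈ t.image Sigma.fst, S k := by rw [Finset.mul_sum]
      _ < ε := by linarith
  refine ⟨hsummable, ?_⟩
  set g : ℕ → lp (fun _ : ℕ => ℂ) 2 :=
    fun k => ∑ j : Fin (k+1), f ⟨k, j⟩ with hg
  have hgnorm : ∀ k, ‖g k‖ ≤ 2 * S k := by
    intro k
    rw [hg]
    exact block_bound k (fun j => x ⟨k, j⟩)
  have hgnorm_summable : Summable (fun k => ‖g k‖) :=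
    Summable.of_nonneg_of_le (fun k => norm_nonneg _) hgnorm (hx.mul_left 2)
  have hts : ∑' p, f p = ∑' k, g k := by
    rw [hsummable.tsum_sigma]
    exact tsum_congr fun k => by rw [tsum_fintype, hg]
  calc ‖∑' p, f p‖ = ‖∑' k, g k‖ := by rw [hts]
    _ ≤ ∑' k, ‖g k‖ := norm_tsum_le_tsum_norm hgnorm_summable
    _ ≤ ∑' k, 2 * S k := Summable.tsum_le_tsum hgnorm hgnorm_summable (hx.mul_left 2)
    _ = 2 * ∑' k, S k := tsum_mul_left
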